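/- arXiv:1912.04089 — 2 statements merged into one kernel-verified Lean document; each statement's English description precedes it below -/
import Mathlib

section
/- With V = Z D Zᵀ + σ² I (Z ∈ ℝ^{n×k}, D symmetric positive definite, σ² > 0), define à = σ² V⁻¹ Z D Zᵀ and B̃ = Z D Zᵀ V⁻¹ Z D Zᵀ. Then à − à B̃⁺ B̃ = 0, where B̃⁺ is the Moore–Penrose pseudoinverse of B̃. -/
open Matrix

/-- The four Penrose conditions characterizing the Moore–Penrose pseudoinverse. -/
def IsMoorePenroseInv {n : ℕ} (B Bp : Matrix (Fin n) (Fin n) ℝ) : Prop :=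
  B * Bp * B = B ∧ Bp * B * Bp = Bp ∧ (B * Bp)ᵀ = B * Bp ∧ (Bp * B)ᵀ = Bp * B

/-!
Write `S = Z D Zᵀ`. Since `S` is positive semidefinite, `V = S + σ² I` is positive definite, and
it commutes with `S`, so `V B̃ = S²`. The matrix `P = I - B̃⁺ B̃` satisfies `B̃ P = 0`, hence
`S² P = 0`; as `S` is symmetric, `(S P)ᵀ (S P) = Pᵀ S² P = 0`, so `S P = 0` and
`Ã P = σ² V⁻¹ S P = 0`.
-/

namespace Matrix

variable {m n R : Type*} [Fintype n]

theorem mul_one_sub_mul_self_eq_zero [Ring R] [DecidableEq n] {B Bp : Matrix n n R}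
    (h : B * Bp * B = B) : B * (1 - Bp * B) = 0 := by
  rw [Matrix.mul_sub, Matrix.mul_one, ← Matrix.mul_assoc, h, sub_self]

theorem IsHermitian.mul_eq_zero_of_mul_self_mul_eq_zero [PartialOrder R] [NonUnitalRing R]
    [StarRing R] [StarOrderedRing R] [NoZeroDivisors R] {S : Matrix n n R} (hS : S.IsHermitian)
    {P : Matrix n m R} (h : S * S * P = 0) : S * P = 0 := by
  rw [← conjTranspose_mul_self_eq_zero]
  calc (S * P)ᴴ * (S * P) = Pᴴ * (Sᴴ * S * P) := by
        simp only [conjTranspose_mul, Matrix.mul_assoc]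
    _ = 0 := by rw [hS.eq, h, Matrix.mul_zero]

theorem mul_mul_nonsing_inv_mul_of_commute [CommRing R] [DecidableEq n] {V S : Matrix n n R}
    (hVS : Commute V S) (hV : IsUnit V.det) (T : Matrix n m R) :
    V * (S * V⁻¹ * T) = S * T := by
  rw [Matrix.mul_assoc, ← Matrix.mul_assoc, hVS.eq, Matrix.mul_assoc,
    mul_nonsing_inv_cancel_left _ _ hV]

end Matrix

theorem stmt5 {n k : ℕ} (Z : Matrix (Fin n) (Fin k) ℝ)
    (D : Matrix (Fin k) (Fin k) ℝ) (hD : D.PosDef)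
    (σ2 : ℝ) (hσ : 0 < σ2)
    (V : Matrix (Fin n) (Fin n) ℝ) (hV : V = Z * D * Zᵀ + σ2 • (1 : Matrix (Fin n) (Fin n) ℝ))
    (A B : Matrix (Fin n) (Fin n) ℝ)
    (hA : A = σ2 • (V⁻¹ * (Z * D * Zᵀ)))
    (hB : B = Z * D * Zᵀ * V⁻¹ * (Z * D * Zᵀ))
    (Bp : Matrix (Fin n) (Fin n) ℝ) (hBp : IsMoorePenroseInv B Bp) :
    A - A * Bp * B = 0 := by
  set S := Z * D * Zᵀ
  have hS : S.PosSemidef := by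
    simpa only [conjTranspose_eq_transpose_of_trivial] using
      hD.posSemidef.mul_mul_conjTranspose_same Z
  have hV_det : IsUnit V.det :=
    (isUnit_iff_isUnit_det V).mp (hV ▸ PosDef.posSemidef_add hS (PosDef.one.smul hσ)).isUnit
  have hVS : Commute V S := hV ▸ (Commute.refl S).add_left ((Commute.one_left S).smul_left σ2)
  have hSSP : S * S * (1 - Bp * B) = 0 := by
    rw [Matrix.mul_assoc, ← mul_mul_nonsing_inv_mul_of_commute hVS hV_det,
      ← Matrix.mul_assoc _ S, ← hB, mul_one_sub_mul_self_eq_zero hBp.1, Matrix.mul_zero]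
  have hSP : S * (1 - Bp * B) = 0 := hS.isHermitian.mul_eq_zero_of_mul_self_mul_eq_zero hSSP
  calc A - A * Bp * B = A * (1 - Bp * B) := by rw [Matrix.mul_sub, Matrix.mul_one, Matrix.mul_assoc]
    _ = σ2 • (V⁻¹ * (S * (1 - Bp * B))) := by rw [hA, Matrix.smul_mul, Matrix.mul_assoc]
    _ = 0 := by rw [hSP, Matrix.mul_zero, smul_zero]
end

section
/- Let V = Z D Zᵀ + σ² I with Z ∈ ℝ^{n×k}, D symmetric positive definite, σ² > 0, and suppose Im(X) ⊆ Im(Z) for X ∈ ℝ^{n×p}. Define A = σ² V⁻¹ (V − X H₀ Xᵀ)(I − σ² V⁻¹) and B = (I − σ² V⁻¹)(V − X H₀ Xᵀ)(I − σ² V⁻¹), where H₀ is any symmetric positive semidefinite p×p matrix with Im(X H₀ Xᵀ) ⊆ Im(X). Then A − A B⁺ B = 0. -/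
/-!
Put `W := 1 - σ² V⁻¹ = Z D Zᵀ V⁻¹` and `M := V - X H₀ Xᵀ`, so that `B = W M W` and `A = M W - B`.
`W` maps into `Im Z` and is injective there (because `V W = Z D Zᵀ` with `D ≻ 0`), and `M` maps
`Im Z` into itself (because `Im (X H₀ Xᵀ) ⊆ Im X ⊆ Im Z`); hence `ker B ⊆ ker (M W)`. As `B Bp B = B`,
`1 - Bp B` maps into `ker B`, so `M W Bp B = M W`, and `A - A Bp B = (M W - B) - (M W - B) = 0`.
-/

open Matrix

namespace Matrix

variable {l m n k : Type*} [Fintype m] [Fintype n] [Fintype k]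

theorem mul_mul_eq_self_of_ker_le {R : Type*} [CommRing R] {B : Matrix m n R}
    {G : Matrix n m R} {C : Matrix l n R} (hBGB : B * G * B = B)
    (hker : ∀ x, B *ᵥ x = 0 → C *ᵥ x = 0) : C * G * B = C := by
  refine mulVec_injective (funext fun x => ?_)
  have hx : B *ᵥ (x - (G * B) *ᵥ x) = 0 := by
    rw [mulVec_sub, mulVec_mulVec, ← Matrix.mul_assoc, hBGB, sub_self]
  have := hker _ hx
  rwa [mulVec_sub, mulVec_mulVec, sub_eq_zero, ← Matrix.mul_assoc, eq_comm] at this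

variable {Z : Matrix n k ℝ} {D : Matrix k k ℝ}

theorem transpose_mulVec_eq_zero_of_mul_mul_transpose_mulVec_eq_zero (hD : D.PosDef)
    {v : n → ℝ} (h : (Z * D * Zᵀ) *ᵥ v = 0) : Zᵀ *ᵥ v = 0 := by
  by_contra hne
  have hpos := hD.dotProduct_mulVec_pos hne
  have hquad : (Zᵀ *ᵥ v) ⬝ᵥ (D *ᵥ (Zᵀ *ᵥ v)) = v ⬝ᵥ ((Z * D * Zᵀ) *ᵥ v) := by
    rw [← mulVec_mulVec, ← mulVec_mulVec, dotProduct_mulVec v Z, ← mulVec_transpose]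
  rw [star_trivial, hquad, h, dotProduct_zero] at hpos
  exact hpos.false

theorem mulVec_eq_zero_of_mul_mul_transpose_mulVec_mulVec_eq_zero (hD : D.PosDef) {c : k → ℝ}
    (h : (Z * D * Zᵀ) *ᵥ (Z *ᵥ c) = 0) : Z *ᵥ c = 0 := by
  have hc : c ∈ LinearMap.ker (Zᵀ * Z).mulVecLin := by
    rw [LinearMap.mem_ker, mulVecLin_apply, ← mulVec_mulVec]
    exact transpose_mulVec_eq_zero_of_mul_mul_transpose_mulVec_eq_zero hD h
  rwa [ker_mulVecLin_transpose_mul_self, LinearMap.mem_ker, mulVecLin_apply] at hc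

variable [DecidableEq n] {σ2 : ℝ}

theorem posDef_mul_mul_transpose_add_smul_one (Z : Matrix n k ℝ) (hD : D.PosDef) (hσ : 0 < σ2) :
    (Z * D * Zᵀ + σ2 • 1).PosDef := by
  have hZDZ : (Z * D * Zᵀ).PosSemidef := by
    simpa using hD.posSemidef.mul_mul_conjTranspose_same Z
  exact PosDef.posSemidef_add hZDZ (PosDef.one.smul hσ)

theorem mul_mul_transpose_add_smul_one_mulVec_mem_range (c : k → ℝ) :
    (Z * D * Zᵀ + σ2 • 1) *ᵥ (Z *ᵥ c) ∈ Set.range Z.mulVec :=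
  ⟨(D * Zᵀ * Z) *ᵥ c + σ2 • c, by
    rw [mulVec_add, mulVec_smul, add_mulVec, smul_mulVec, one_mulVec, mulVec_mulVec,
      mulVec_mulVec]
    simp only [Matrix.mul_assoc]⟩

section

variable {V : Matrix n n ℝ} (hV : V = Z * D * Zᵀ + σ2 • 1) (hVu : IsUnit V)
include hV hVu

theorem one_sub_smul_inv_eq_mul_mul_transpose_mul_inv : 1 - σ2 • V⁻¹ = Z * D * Zᵀ * V⁻¹ := by
  rw [eq_sub_of_add_eq hV.symm, Matrix.sub_mul,
    mul_nonsing_inv _ ((isUnit_iff_isUnit_det V).mp hVu), Matrix.smul_mul, Matrix.one_mul]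

theorem mul_one_sub_smul_inv_eq_mul_mul_transpose : V * (1 - σ2 • V⁻¹) = Z * D * Zᵀ := by
  rw [Matrix.mul_sub, Matrix.mul_one, Matrix.mul_smul,
    mul_nonsing_inv _ ((isUnit_iff_isUnit_det V).mp hVu), hV, add_sub_cancel_right]

theorem one_sub_smul_inv_mulVec_mem_range (x : n → ℝ) :
    (1 - σ2 • V⁻¹) *ᵥ x ∈ Set.range Z.mulVec :=
  ⟨(D * Zᵀ * V⁻¹) *ᵥ x, by
    rw [one_sub_smul_inv_eq_mul_mul_transpose_mul_inv hV hVu, mulVec_mulVec]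
    simp only [Matrix.mul_assoc]⟩

theorem eq_zero_of_one_sub_smul_inv_mulVec_eq_zero (hD : D.PosDef) {u : n → ℝ}
    (hu : u ∈ Set.range Z.mulVec) (h : (1 - σ2 • V⁻¹) *ᵥ u = 0) : u = 0 := by
  obtain ⟨c, rfl⟩ := hu
  refine mulVec_eq_zero_of_mul_mul_transpose_mulVec_mulVec_eq_zero hD ?_
  rw [← mul_one_sub_smul_inv_eq_mul_mul_transpose hV hVu, ← mulVec_mulVec, h, mulVec_zero]

end

end Matrix

theorem stmt12_general {n k p : ℕ} (Z : Matrix (Fin n) (Fin k) ℝ)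
    (D : Matrix (Fin k) (Fin k) ℝ) (hD : D.PosDef)
    (σ2 : ℝ) (hσ : 0 < σ2)
    (V : Matrix (Fin n) (Fin n) ℝ) (hV : V = Z * D * Zᵀ + σ2 • (1 : Matrix (Fin n) (Fin n) ℝ))
    (X : Matrix (Fin n) (Fin p) ℝ)
    (hXZ : Set.range X.mulVec ⊆ Set.range Z.mulVec)
    (H0 : Matrix (Fin p) (Fin p) ℝ)
    (hH0Im : Set.range (X * H0 * Xᵀ).mulVec ⊆ Set.range X.mulVec)
    (A B : Matrix (Fin n) (Fin n) ℝ)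
    (hA : A = σ2 • V⁻¹ * (V - X * H0 * Xᵀ) * (1 - σ2 • V⁻¹))
    (hB : B = (1 - σ2 • V⁻¹) * (V - X * H0 * Xᵀ) * (1 - σ2 • V⁻¹))
    (Bp : Matrix (Fin n) (Fin n) ℝ) (hBp : IsMoorePenroseInv B Bp) :
    A - A * Bp * B = 0 := by
  have hVu : IsUnit V := (hV ▸ posDef_mul_mul_transpose_add_smul_one Z hD hσ).isUnit
  set W := 1 - σ2 • V⁻¹
  set M := V - X * H0 * Xᵀ
  have hAMB : A = M * W - B := by
    rw [hA, hB, ← sub_sub_cancel 1 (σ2 • V⁻¹), Matrix.sub_mul, Matrix.sub_mul, Matrix.one_mul]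
  have hMrange : ∀ u ∈ Set.range Z.mulVec, M *ᵥ u ∈ Set.range Z.mulVec := by
    rintro _ ⟨c, rfl⟩
    obtain ⟨a, ha⟩ := hV ▸ mul_mul_transpose_add_smul_one_mulVec_mem_range (D := D) (σ2 := σ2) c
    obtain ⟨b, hb⟩ := hXZ (hH0Im ⟨Z *ᵥ c, rfl⟩)
    exact ⟨a - b, by rw [mulVec_sub, ha, hb, sub_mulVec]⟩
  have hker : ∀ x, B *ᵥ x = 0 → (M * W) *ᵥ x = 0 := by
    intro x hx
    rw [hB, ← mulVec_mulVec, ← mulVec_mulVec] at hx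
    rw [← mulVec_mulVec]
    exact eq_zero_of_one_sub_smul_inv_mulVec_eq_zero hV hVu hD
      (hMrange _ (one_sub_smul_inv_mulVec_mem_range hV hVu x)) hx
  rw [hAMB, Matrix.sub_mul (M * W), Matrix.sub_mul (M * W * Bp),
    mul_mul_eq_self_of_ker_le hBp.1 hker, hBp.1, sub_self]

theorem stmt12 {n k p : ℕ} (Z : Matrix (Fin n) (Fin k) ℝ)
    (D : Matrix (Fin k) (Fin k) ℝ) (hD : D.PosDef)
    (σ2 : ℝ) (hσ : 0 < σ2)
    (V : Matrix (Fin n) (Fin n) ℝ) (hV : V = Z * D * Zᵀ + σ2 • (1 : Matrix (Fin n) (Fin n) ℝ))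
    (X : Matrix (Fin n) (Fin p) ℝ)
    (hXZ : Set.range X.mulVec ⊆ Set.range Z.mulVec)
    (H0 : Matrix (Fin p) (Fin p) ℝ) (hH0 : H0.PosSemidef)
    (hH0Im : Set.range (X * H0 * Xᵀ).mulVec ⊆ Set.range X.mulVec)
    (A B : Matrix (Fin n) (Fin n) ℝ)
    (hA : A = σ2 • V⁻¹ * (V - X * H0 * Xᵀ) * (1 - σ2 • V⁻¹))
    (hB : B = (1 - σ2 • V⁻¹) * (V - X * H0 * Xᵀ) * (1 - σ2 • V⁻¹))
    (Bp : Matrix (Fin n) (Fin n) ℝ) (hBp : IsMoorePenroseInv B Bp) :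
    A - A * Bp * B = 0 :=
  stmt12_general Z D hD σ2 hσ V hV X hXZ H0 hH0Im A B hA hB Bp hBp
end
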